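/- arXiv:1712.09341 — 2 statements merged into one kernel-verified Lean document; each statement's English description precedes it below -/
import Mathlib

section
/- For all nonnegative integers n and \ell and real numbers m, r, the r-Dowling numbers satisfy D_{m,r}(n+\ell) = \sum_{j=0}^{\ell} \sum_{k=0}^{n} W_{m,r}(\ell, j) \binom{n}{k} (mj)^{n-k} D_{m,r}(k). -/
/-- The r-Whitney numbers of the second kind, defined by the triangular recurrence
`W m r n k = W m r (n-1) (k-1) + (m*k+r) * W m r (n-1) k`, with `W m r 0 0 = 1`
and vanishing for `k > n` (and for "k < 0", encoded by the `n+1, 0` case). -/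
noncomputable def rWhitney (m r : ℝ) : ℕ → ℕ → ℝ
  | 0, 0 => 1
  | 0, _ + 1 => 0
  | n + 1, 0 => r * rWhitney m r n 0
  | n + 1, k + 1 => rWhitney m r n k + (m * (k + 1) + r) * rWhitney m r n (k + 1)
/-- The r-Dowling number: the sum over k ≤ n of `W m r n k`. -/
noncomputable def rDowlingNum (m r : ℝ) (n : ℕ) : ℝ :=
  ∑ k ∈ Finset.range (n + 1), rWhitney m r n k

/-! Let `T f x = f (x + m) + (x + r) * f x`. The recurrence of `W` says exactly that
`(T^ℓ f) 0 = ∑ j, W(ℓ, j) f (m j)`; in particular `D(n) = (T^n 1) 0`. Conjugating `T` by the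
translation `f ↦ f (· + x)` gives `T + x`, so `(T^n 1) x = ((T + x)^n 1) 0`, which the binomial
theorem expands into `∑ k, C(n, k) x^(n-k) D(k)`. Applying the first identity to `f = T^n 1`
gives the theorem. -/

open Finset

section Operator

variable {R : Type*} [CommSemiring R]

def dowlingOp (m r : R) : Module.End R (R → R) where
  toFun f x := f (x + m) + (x + r) * f x
  map_add' f g := by ext x; simp only [Pi.add_apply]; ring
  map_smul' c f := by ext x; simp only [Pi.smul_apply, smul_eq_mul, RingHom.id_apply]; ring

@[simp]
lemma dowlingOp_apply (m r : R) (f : R → R) (x : R) :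
    dowlingOp m r f x = f (x + m) + (x + r) * f x := rfl

lemma semiconjBy_funLeft_add_dowlingOp (m r x : R) :
    SemiconjBy (LinearMap.funLeft R R (· + x)) (dowlingOp m r)
      (dowlingOp m r + algebraMap R _ x) := by
  ext f y
  simp only [Module.End.mul_apply, LinearMap.funLeft_apply, dowlingOp_apply, LinearMap.add_apply,
    Module.algebraMap_end_apply, Pi.add_apply, Pi.smul_apply, smul_eq_mul, add_right_comm y x m]
  ring

lemma dowlingOp_pow_apply_one (m r : R) (n : ℕ) (x : R) :
    (dowlingOp m r ^ n) 1 x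
      = ∑ k ∈ range (n + 1), (n.choose k : R) * x ^ (n - k) * (dowlingOp m r ^ k) 1 0 := by
  have translate := (semiconjBy_funLeft_add_dowlingOp m r x).pow_right n
  have expand := (Algebra.commute_algebraMap_right x (dowlingOp m r)).add_pow n
  calc (dowlingOp m r ^ n) 1 x
      = (LinearMap.funLeft R R (· + x) * dowlingOp m r ^ n) 1 0 := by simp
    _ = ((dowlingOp m r + algebraMap R _ x) ^ n) 1 0 := by
        rw [translate.eq, Module.End.mul_apply]; rfl
    _ = _ := by
        rw [expand, LinearMap.sum_apply, Finset.sum_apply]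
        refine sum_congr rfl fun k _ ↦ ?_
        simp only [Module.End.mul_apply, Module.End.natCast_apply, ← map_pow,
          Module.algebraMap_end_apply, ← Nat.cast_smul_eq_nsmul R, map_smul, Pi.smul_apply,
          smul_eq_mul]
        ring

end Operator

lemma rWhitney_eq_zero_of_lt (m r : ℝ) {n k : ℕ} (h : n < k) : rWhitney m r n k = 0 := by
  induction n generalizing k with
  | zero =>
    obtain ⟨k, rfl⟩ := Nat.exists_eq_add_one_of_ne_zero h.ne'
    rfl
  | succ n ih =>
    obtain ⟨k, rfl⟩ := Nat.exists_eq_add_one_of_ne_zero (n.succ_pos.trans h).ne'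
    simp only [rWhitney, ih (by omega : n < k), ih (by omega : n < k + 1), mul_zero, add_zero]

lemma dowlingOp_pow_apply_zero (m r : ℝ) (ℓ : ℕ) (f : ℝ → ℝ) :
    (dowlingOp m r ^ ℓ) f 0 = ∑ j ∈ range (ℓ + 1), rWhitney m r ℓ j * f (m * j) := by
  induction ℓ generalizing f with
  | zero => simp [rWhitney]
  | succ ℓ ih =>
    set g : ℕ → ℝ := fun j ↦ rWhitney m r ℓ j * ((m * j + r) * f (m * j))
    have shift : ∑ j ∈ range (ℓ + 1), g j = ∑ j ∈ range (ℓ + 1), g (j + 1) + g 0 := by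
      rw [← sum_range_succ', sum_range_succ _ (ℓ + 1),
        show g (ℓ + 1) = 0 by simp [g, rWhitney_eq_zero_of_lt m r ℓ.lt_succ_self], add_zero]
    rw [pow_succ, Module.End.mul_apply, ih, sum_range_succ' _ (ℓ + 1)]
    simp only [dowlingOp_apply, mul_add, sum_add_distrib]
    rw [shift]
    simp only [g, rWhitney, Nat.cast_add, Nat.cast_one, Nat.cast_zero, mul_zero, zero_add,
      mul_add_one]
    rw [← add_assoc, ← sum_add_distrib]
    congr 1
    · exact sum_congr rfl fun j _ ↦ by ring
    · ring

lemma rDowlingNum_eq_dowlingOp_pow_apply (m r : ℝ) (n : ℕ) :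
    rDowlingNum m r n = (dowlingOp m r ^ n) 1 0 := by
  simp [dowlingOp_pow_apply_zero, rDowlingNum]

theorem rDowlingNum_spivey (n ℓ : ℕ) (m r : ℝ) :
    rDowlingNum m r (n + ℓ) =
      ∑ j ∈ Finset.range (ℓ + 1), ∑ k ∈ Finset.range (n + 1),
        rWhitney m r ℓ j * (n.choose k : ℝ) * (m * j) ^ (n - k) *
          rDowlingNum m r k := by
  simp only [rDowlingNum_eq_dowlingOp_pow_apply]
  rw [add_comm, pow_add, Module.End.mul_apply, dowlingOp_pow_apply_zero]
  refine sum_congr rfl fun j _ ↦ ?_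
  rw [dowlingOp_pow_apply_one, mul_sum]
  exact sum_congr rfl fun k _ ↦ by ring
end

section
/- For all nonnegative integers n, \ell and i with 0 \le i \le n+\ell, and real numbers m, r, the r-Whitney numbers of the second kind satisfy W_{m,r}(n+\ell, i) = \sum_{j=0}^{\ell} \sum_{k=0}^{n} W_{m,r}(\ell, j) \binom{n}{k} (mj)^{n-k} W_{m,r}(k, i-j). -/
lemma rWhitney_zero_row (m r : ℝ) (k : ℕ) :
    rWhitney m r 0 k = if k = 0 then 1 else 0 := by
  cases k <;> simp [rWhitney]

lemma rWhitney_zero_col (m r : ℝ) (n : ℕ) : rWhitney m r n 0 = r ^ n := by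
  induction n with
  | zero => simp [rWhitney]
  | succ n ih => rw [rWhitney, ih]; ring

lemma rWhitney_eq_zero (m r : ℝ) : ∀ n k, n < k → rWhitney m r n k = 0 := by
  intro n
  induction n with
  | zero =>
    intro k hk
    cases k with
    | zero => omega
    | succ k => simp [rWhitney]
  | succ n ih =>
    intro k hk
    cases k with
    | zero => omega
    | succ k => rw [rWhitney, ih k (by omega), ih (k + 1) (by omega)]; ring

lemma pascal_sum (n : ℕ) (c : ℕ → ℝ) :
    ∑ k ∈ Finset.range (n + 2), ((n + 1).choose k : ℝ) * c k =
      ∑ k ∈ Finset.range (n + 1), (n.choose k : ℝ) * c (k + 1) +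
      ∑ k ∈ Finset.range (n + 1), (n.choose k : ℝ) * c k := by
  have h2 : ∑ k ∈ Finset.range (n + 1), (n.choose k : ℝ) * c k =
      ∑ k ∈ Finset.range n, (n.choose (k + 1) : ℝ) * c (k + 1) + c 0 := by
    rw [Finset.sum_range_succ' _ n]
    simp
  have h3 : ∑ k ∈ Finset.range (n + 1), (n.choose (k + 1) : ℝ) * c (k + 1) =
      ∑ k ∈ Finset.range n, (n.choose (k + 1) : ℝ) * c (k + 1) := by
    rw [Finset.sum_range_succ]
    simp [Nat.choose_eq_zero_of_lt (by omega : n < n + 1)]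
  rw [Finset.sum_range_succ' _ (n + 1)]
  have h1 : ∀ k ∈ Finset.range (n + 1), ((n + 1).choose (k + 1) : ℝ) * c (k + 1) =
      (n.choose k : ℝ) * c (k + 1) + (n.choose (k + 1) : ℝ) * c (k + 1) := by
    intro k _
    rw [Nat.choose_succ_succ]
    push_cast
    ring
  rw [Finset.sum_congr rfl h1, Finset.sum_add_distrib, h2, h3]
  simp
  ring

lemma pointwise (m r : ℝ) (k i j : ℕ) :
    (if j ≤ i + 1 then rWhitney m r (k + 1) (i + 1 - j) else 0) +
      (m * j) * (if j ≤ i + 1 then rWhitney m r k (i + 1 - j) else 0) =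
    (if j ≤ i then rWhitney m r k (i - j) else 0) +
      (m * (i + 1) + r) * (if j ≤ i + 1 then rWhitney m r k (i + 1 - j) else 0) := by
  rcases le_or_gt j i with hj | hj
  · have h1 : j ≤ i + 1 := by omega
    have h2 : i + 1 - j = (i - j) + 1 := by omega
    simp only [if_pos hj, if_pos h1]
    rw [h2, rWhitney]
    have hc : ((i - j : ℕ) : ℝ) = (i : ℝ) - (j : ℝ) := by
      push_cast [Nat.cast_sub hj]; ring
    rw [hc]
    ring
  · rcases eq_or_lt_of_le (Nat.succ_le_of_lt hj) with hj2 | hj2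
    · have h1 : j ≤ i + 1 := le_of_eq hj2.symm
      have h2 : i + 1 - j = 0 := by omega
      simp only [if_neg (show ¬ j ≤ i by omega), if_pos h1]
      rw [h2, rWhitney]
      have hc : ((j : ℕ) : ℝ) = (i : ℝ) + 1 := by
        rw [← hj2]; push_cast; ring
      rw [hc]
      ring
    · simp only [if_neg (show ¬ j ≤ i by omega), if_neg (show ¬ j ≤ i + 1 by omega)]
      ring

lemma key (m r : ℝ) (ℓ n i : ℕ) :
    ∑ j ∈ Finset.range (ℓ + 1), ∑ k ∈ Finset.range (n + 1 + 1),
        rWhitney m r ℓ j * ((n + 1).choose k : ℝ) * (m * j) ^ (n + 1 - k) *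
          (if j ≤ i + 1 then rWhitney m r k (i + 1 - j) else 0) =
    (∑ j ∈ Finset.range (ℓ + 1), ∑ k ∈ Finset.range (n + 1),
        rWhitney m r ℓ j * (n.choose k : ℝ) * (m * j) ^ (n - k) *
          (if j ≤ i then rWhitney m r k (i - j) else 0)) +
    (m * (i + 1) + r) *
    ∑ j ∈ Finset.range (ℓ + 1), ∑ k ∈ Finset.range (n + 1),
        rWhitney m r ℓ j * (n.choose k : ℝ) * (m * j) ^ (n - k) *
          (if j ≤ i + 1 then rWhitney m r k (i + 1 - j) else 0) := by
  rw [Finset.mul_sum, ← Finset.sum_add_distrib]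
  refine Finset.sum_congr rfl fun j _ => ?_
  have hp := pascal_sum n (fun k => rWhitney m r ℓ j * (m * j) ^ (n + 1 - k) *
      (if j ≤ i + 1 then rWhitney m r k (i + 1 - j) else 0))
  have hL : ∑ k ∈ Finset.range (n + 1 + 1),
      rWhitney m r ℓ j * ((n + 1).choose k : ℝ) * (m * j) ^ (n + 1 - k) *
        (if j ≤ i + 1 then rWhitney m r k (i + 1 - j) else 0) =
      ∑ k ∈ Finset.range (n + 2), ((n + 1).choose k : ℝ) *
        (rWhitney m r ℓ j * (m * j) ^ (n + 1 - k) *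
          (if j ≤ i + 1 then rWhitney m r k (i + 1 - j) else 0)) := by
    refine Finset.sum_congr rfl fun k _ => by ring
  rw [hL, hp, Finset.mul_sum, ← Finset.sum_add_distrib, ← Finset.sum_add_distrib]
  refine Finset.sum_congr rfl fun k hk => ?_
  have hkn : k ≤ n := by simpa [Nat.lt_succ_iff] using hk
  have e1 : n + 1 - (k + 1) = n - k := by omega
  have e2 : n + 1 - k = (n - k) + 1 := by omega
  simp only [e1, e2, pow_succ]
  have hpt := pointwise m r k i j
  linear_combination (rWhitney m r ℓ j * (n.choose k : ℝ) * (m * j) ^ (n - k)) * hpt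

lemma rWhitney_spivey_aux (m r : ℝ) (ℓ : ℕ) : ∀ n i : ℕ,
    rWhitney m r (n + ℓ) i =
      ∑ j ∈ Finset.range (ℓ + 1), ∑ k ∈ Finset.range (n + 1),
        rWhitney m r ℓ j * (n.choose k : ℝ) * (m * j) ^ (n - k) *
          (if j ≤ i then rWhitney m r k (i - j) else 0) := by
  intro n
  induction n with
  | zero =>
    intro i
    have hR : ∀ j ∈ Finset.range (ℓ + 1),
        (∑ k ∈ Finset.range (0 + 1),
          rWhitney m r ℓ j * ((0 : ℕ).choose k : ℝ) * (m * j) ^ (0 - k) *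
            (if j ≤ i then rWhitney m r k (i - j) else 0)) =
        if j = i then rWhitney m r ℓ j else 0 := by
      intro j _
      rw [Finset.sum_range_one]
      rcases le_or_gt j i with hj | hj
      · rw [if_pos hj, rWhitney_zero_row]
        rcases eq_or_lt_of_le hj with h | h
        · subst h; simp
        · rw [if_neg (by omega), if_neg (by omega)]; ring
      · rw [if_neg (by omega), if_neg (by omega)]; ring
    rw [Finset.sum_congr rfl hR, Finset.sum_ite_eq' (Finset.range (ℓ + 1)) i
      (fun j => rWhitney m r ℓ j)]
    rcases le_or_gt i ℓ with h | h
    · rw [if_pos (Finset.mem_range.mpr (by omega))]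
      norm_num
    · rw [if_neg (by simp; omega), Nat.zero_add, rWhitney_eq_zero m r ℓ i h]
  | succ n ih =>
    intro i
    have hadd : n + 1 + ℓ = (n + ℓ) + 1 := by omega
    cases i with
    | zero =>
      rw [hadd, rWhitney, rWhitney_zero_col]
      have hR : ∀ j ∈ Finset.range (ℓ + 1),
          (∑ k ∈ Finset.range (n + 1 + 1),
            rWhitney m r ℓ j * ((n + 1).choose k : ℝ) * (m * j) ^ (n + 1 - k) *
              (if j ≤ 0 then rWhitney m r k (0 - j) else 0)) =
          if j = 0 then r ^ (ℓ + n + 1) else 0 := by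
        intro j _
        rcases Nat.eq_zero_or_pos j with hj | hj
        · subst hj
          rw [if_pos rfl]
          have : ∀ k ∈ Finset.range (n + 1 + 1),
              rWhitney m r ℓ 0 * ((n + 1).choose k : ℝ) * (m * (0 : ℕ)) ^ (n + 1 - k) *
                (if (0 : ℕ) ≤ 0 then rWhitney m r k (0 - 0) else 0) =
              if k = n + 1 then r ^ (ℓ + n + 1) else 0 := by
            intro k hk
            have hk' : k ≤ n + 1 := by simpa [Nat.lt_succ_iff] using hk
            rcases eq_or_lt_of_le hk' with h | h
            · subst h
              rw [if_pos rfl]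
              simp [rWhitney_zero_col]
              ring
            · rw [if_neg (show k ≠ n + 1 by omega)]
              have hz : (m * ((0 : ℕ) : ℝ)) ^ (n + 1 - k) = 0 := by
                rw [Nat.cast_zero, mul_zero]
                exact zero_pow (by omega)
              rw [hz]
              ring
          rw [Finset.sum_congr rfl this, Finset.sum_ite_eq'
            (Finset.range (n + 1 + 1)) (n + 1) (fun _ => r ^ (ℓ + n + 1))]
          rw [if_pos (Finset.mem_range.mpr (by omega))]
        · rw [if_neg (show j ≠ 0 by omega)]
          refine Finset.sum_eq_zero fun k _ => ?_
          rw [if_neg (show ¬ j ≤ 0 by omega)]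
          ring
      rw [Finset.sum_congr rfl hR, Finset.sum_ite_eq' (Finset.range (ℓ + 1)) 0
        (fun _ => r ^ (ℓ + n + 1))]
      rw [if_pos (Finset.mem_range.mpr (show (0:ℕ) < ℓ + 1 by omega))]
      ring
    | succ i =>
      rw [hadd, rWhitney, ih i, ih (i + 1), key m r ℓ n i]

theorem rWhitney_spivey_recurrence (n ℓ i : ℕ) (hi : i ≤ n + ℓ) (m r : ℝ) :
    rWhitney m r (n + ℓ) i =
      ∑ j ∈ Finset.range (ℓ + 1), ∑ k ∈ Finset.range (n + 1),
        rWhitney m r ℓ j * (n.choose k : ℝ) * (m * j) ^ (n - k) *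
          (if j ≤ i then rWhitney m r k (i - j) else 0) := by
  exact rWhitney_spivey_aux m r ℓ n i
end
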